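/- arXiv:2011.12777 — 2 statements merged into one kernel-verified Lean document; each statement's English description precedes it below -/
import Mathlib

section
/- With T = L + M, R = K + M as above, R is a Noetherian ring if and only if T is Noetherian, K is a field, and [L:K] < ∞. -/
/-!
(⇒) A nonzero `m ∈ M` satisfies `m T ⊆ M ⊆ R`, so `t ↦ m t` embeds `T` into `R` as an
`R`-module: `T` is a Noetherian `R`-module, hence a Noetherian ring and finite over `R`. The ring
retraction `T → T ⧸ M ≅ L` maps `R` into `K`, so it turns `R`-generators of `T` into
`K`-generators of `L`; then `L` is integral over `K`, and `K` is a field because `L` is.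

(⇐) This is the special case of the Eakin–Nagata theorem where `T = V + R` for a
finite-dimensional `K`-subspace `V` (here `V = L`). Given an `R`-submodule `N` of `T`, pick a
finite `S ⊆ N` generating the ideal `T N`. Splitting each coefficient as `v + r` with `v ∈ V`,
`r ∈ R` shows `N ⊆ span_R S + (N ∩ V·S)`, and `N ∩ V·S` lies in a finite-dimensional `K`-space.
-/

section Setup

variable {T : Type*} [CommRing T] [IsDomain T]

/-- The subring `K + M` of `T`, for a subring `K` and an ideal `M` of `T`. -/
def ringR (K : Subring T) (M : Ideal T) : Subring T where
  carrier := {t | ∃ k ∈ K, ∃ m ∈ M, t = k + m}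
  one_mem' := ⟨1, K.one_mem, 0, M.zero_mem, by ring⟩
  zero_mem' := ⟨0, K.zero_mem, 0, M.zero_mem, by ring⟩
  add_mem' := by
    rintro a b ⟨k1, hk1, m1, hm1, rfl⟩ ⟨k2, hk2, m2, hm2, rfl⟩
    exact ⟨k1 + k2, K.add_mem hk1 hk2, m1 + m2, M.add_mem hm1 hm2, by ring⟩
  neg_mem' := by
    rintro a ⟨k, hk, m, hm, rfl⟩
    exact ⟨-k, K.neg_mem hk, -m, M.neg_mem hm, by ring⟩
  mul_mem' := by
    rintro a b ⟨k1, hk1, m1, hm1, rfl⟩ ⟨k2, hk2, m2, hm2, rfl⟩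
    refine ⟨k1 * k2, K.mul_mem hk1 hk2, k1 * m2 + m1 * k2 + m1 * m2, ?_, by ring⟩
    exact M.add_mem (M.add_mem (M.mul_mem_left _ hm2) (M.mul_mem_right _ hm1))
      (M.mul_mem_left _ hm2)

theorem K_le_ringR (K : Subring T) (M : Ideal T) : K ≤ ringR K M :=
  fun k hk => ⟨k, hk, 0, M.zero_mem, (add_zero k).symm⟩

/-- An ideal `A` of `T`, viewed as a module over a subring `S` of `T`. -/
def idealAsMod (S : Subring T) (A : Ideal T) : Submodule ↥S T where
  carrier := A
  add_mem' := fun ha hb => A.add_mem ha hb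
  zero_mem' := A.zero_mem
  smul_mem' := fun r a ha => A.mul_mem_left (r : T) ha

/-- The subring `L` of `T` is a field. -/
def IsFieldSub (L : Subring T) : Prop := ∀ x ∈ L, x ≠ 0 → ∃ y ∈ L, x * y = 1

/-- `T = L ⊕ M` as additive groups: `L` is a retract of `T` with maximal ideal `M`. -/
def DirectSumDecomp (L : Subring T) (M : Ideal T) : Prop :=
  (∀ t : T, ∃ l ∈ L, ∃ m ∈ M, t = l + m) ∧ ∀ x ∈ L, x ∈ M → x = 0

/-- `L` is the field of fractions of `K` (inside `T`). -/
def IsFracOf (K L : Subring T) : Prop :=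
  ∀ l ∈ L, ∃ a ∈ K, ∃ b ∈ K, b ≠ 0 ∧ l * b = a

/-- The module structure on a subring over a smaller subring. -/
noncomputable def modOfLE {K L : Subring T} (h : K ≤ L) : Module ↥K ↥L :=
  ((Subring.inclusion h).toAlgebra).toModule

/-- `T` localized at the prime `M` is a valuation domain. -/
def ValAtPrime (M : Ideal T) (hp : M.IsPrime) : Prop :=
  @ValuationRing (@Localization.AtPrime T _ M hp) _
    (@IsLocalization.isDomain_of_local_atPrime T _ _ M hp)

/-- A Prüfer domain: every nonzero finitely generated ideal is invertible. -/
def IsPruferDomain (A : Type*) [CommRing A] [IsDomain A] : Prop :=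
  ∀ I : Ideal A, I ≠ ⊥ → I.FG →
    IsUnit (I : FractionalIdeal (nonZeroDivisors A) (FractionRing A))

/-- A GCD domain: any two nonzero elements admit a greatest common divisor. -/
def IsGCDDomain (A : Type*) [CommRing A] [IsDomain A] : Prop :=
  ∀ a b : A, a ≠ 0 → b ≠ 0 →
    ∃ g : A, g ∣ a ∧ g ∣ b ∧ ∀ c : A, c ∣ a → c ∣ b → c ∣ g

/-- The algebra structure of the fraction field of `T` over a subring of `T`. -/
noncomputable def algFrac (S : Subring T) : Algebra ↥S (FractionRing T) :=
  ((algebraMap T (FractionRing T)).comp S.subtype).toAlgebra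

end Setup


open Submodule

theorem isNoetherian_of_mul_mem_range {A B : Type*} [CommRing A] [CommRing B] [Algebra A B]
    [IsNoetherianRing A] {b : B} (hb : b ∈ nonZeroDivisors B)
    (hbB : ∀ x : B, b * x ∈ (algebraMap A B).range) : IsNoetherian A B := by
  refine isNoetherian_of_injective ((LinearMap.mulLeft A b).codRestrict
    (LinearMap.range (Algebra.linearMap A B)) hbB) fun x y hxy => ?_
  exact (mul_cancel_left_mem_nonZeroDivisors hb).mp (congrArg Subtype.val hxy)

theorem IsNoetherianRing.of_isNoetherian_of_injective {A B : Type*} [CommRing A] [CommRing B]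
    [Algebra A B] [IsNoetherian A B] (h : Function.Injective (algebraMap A B)) :
    IsNoetherianRing A :=
  isNoetherian_of_injective (Algebra.linearMap A B) h

theorem exists_sub_mem_span_of_mem_ideal_span {F A B : Type*} [CommRing F] [CommRing A]
    [CommRing B] [Algebra F B] [Algebra A B] {V : Submodule F B}
    (hB : ∀ x : B, ∃ v ∈ V, ∃ a : A, x = v + algebraMap A B a) {S : Finset B} {x : B}
    (hx : x ∈ Ideal.span (S : Set B)) :
    ∃ w ∈ V * span F (S : Set B), x - w ∈ span A (S : Set B) := by
  choose v hv a hva using hB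
  obtain ⟨c, -, rfl⟩ := mem_span_finset.mp hx
  refine ⟨∑ s ∈ S, v (c s) * s, sum_mem fun s hs => mul_mem_mul (hv _) (subset_span hs), ?_⟩
  have : ∑ s ∈ S, c s • s - ∑ s ∈ S, v (c s) * s = ∑ s ∈ S, a (c s) • s := by
    rw [← Finset.sum_sub_distrib]
    refine Finset.sum_congr rfl fun s _ => ?_
    rw [smul_eq_mul, Algebra.smul_def]
    linear_combination s * hva (c s)
  rw [this]
  exact sum_mem fun s hs => smul_mem _ _ (subset_span hs)

theorem isNoetherian_of_eq_fg_add_range {F A B : Type*} [CommRing F] [CommRing A] [CommRing B]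
    [Algebra F A] [Algebra A B] [Algebra F B] [IsScalarTower F A B]
    [IsNoetherianRing F] [IsNoetherianRing B] {V : Submodule F B} (hV : V.FG)
    (hB : ∀ x : B, ∃ v ∈ V, ∃ a : A, x = v + algebraMap A B a) : IsNoetherian A B := by
  refine ⟨fun N => ?_⟩
  obtain ⟨S, hSN, hS⟩ := (fg_span_iff_fg_span_finset_subset (N : Set B)).mp
    (IsNoetherian.noetherian (Ideal.span (N : Set B)))
  set W := V * span F (S : Set B)
  obtain ⟨C, hC⟩ := (hV.mul (fg_span S.finite_toSet)).of_le
    (inf_le_right : N.restrictScalars F ⊓ W ≤ W)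
  have hSN' : span A (S : Set B) ≤ N := span_le.mpr hSN
  suffices N = span A S ⊔ span A C by
    rw [this]
    exact (fg_span S.finite_toSet).sup (fg_span C.finite_toSet)
  refine le_antisymm (fun x hx => ?_) (sup_le hSN' ?_)
  · obtain ⟨w, hwW, hxw⟩ := exists_sub_mem_span_of_mem_ideal_span hB
      (show x ∈ span B (S : Set B) from hS ▸ subset_span hx)
    have hwN : w ∈ N := by simpa using N.sub_mem hx (hSN' hxw)
    have hwC : w ∈ span F (C : Set B) := hC ▸ ⟨hwN, hwW⟩
    rw [← sub_add_cancel x w]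
    exact add_mem (mem_sup_left hxw) (mem_sup_right (span_le_restrictScalars F A _ hwC))
  · exact span_le.mpr fun c hc => (hC ▸ subset_span hc : c ∈ N.restrictScalars F ⊓ W).1

section Setting

variable {T : Type*} [CommRing T] {K L : Subring T} {M : Ideal T}

theorem IsFieldSub.isField [Nontrivial T] (hL : IsFieldSub L) : IsField L where
  exists_pair_ne := ⟨0, 1, zero_ne_one⟩
  mul_comm := mul_comm
  mul_inv_cancel {x} hx := by
    obtain ⟨y, hyL, hxy⟩ := hL x x.2 (by simpa using hx)
    exact ⟨⟨y, hyL⟩, Subtype.val_injective hxy⟩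

theorem finite_iff_fg_span (hKL : K ≤ L) :
    @Module.Finite K L _ _ (modOfLE hKL) ↔ (span K (L : Set T)).FG := by
  let _ := modOfLE hKL
  let f : L →ₗ[K] T :=
    { toFun := Subtype.val, map_add' := fun _ _ => rfl, map_smul' := fun _ _ => rfl }
  have hf : LinearMap.range f = span K (L : Set T) := by
    rw [← span_eq (LinearMap.range f), LinearMap.coe_range]
    exact congrArg _ Subtype.range_coe
  rw [Module.Finite.equiv_iff (LinearEquiv.ofInjective f Subtype.val_injective), hf,
    Module.Finite.iff_fg]

theorem isField_of_finite [Nontrivial T] (hL : IsFieldSub L) (hKL : K ≤ L)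
    (hfin : @Module.Finite K L _ _ (modOfLE hKL)) : IsField K :=
  let _ := (Subring.inclusion hKL).toAlgebra
  have : Module.Finite K L := hfin
  have := Algebra.IsIntegral.of_finite K L
  isField_of_isIntegral_of_isField (Subring.inclusion_injective hKL) hL.isField

theorem mem_ringR_of_mem (K : Subring T) {m : T} (hm : m ∈ M) : m ∈ ringR K M :=
  ⟨0, K.zero_mem, m, hm, (zero_add m).symm⟩

namespace DirectSumDecomp

variable (h : DirectSumDecomp L M)

noncomputable def quotientEquiv : L ≃+* T ⧸ M :=
  RingEquiv.ofBijective ((Ideal.Quotient.mk M).comp L.subtype) <| by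
    refine ⟨(injective_iff_map_eq_zero _).mpr fun l hl => ?_, fun t => ?_⟩
    · exact Subtype.val_injective (h.2 l l.2 (Ideal.Quotient.eq_zero_iff_mem.mp hl))
    · obtain ⟨t, rfl⟩ := Ideal.Quotient.mk_surjective t
      obtain ⟨l, hl, m, hm, rfl⟩ := h.1 t
      exact ⟨⟨l, hl⟩, Ideal.Quotient.eq.mpr (by simpa using M.neg_mem hm)⟩

noncomputable def proj : T →+* T :=
  L.subtype.comp (h.quotientEquiv.symm.toRingHom.comp (Ideal.Quotient.mk M))

theorem proj_mem (t : T) : h.proj t ∈ L :=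
  Subtype.prop _

theorem proj_eq_self {l : T} (hl : l ∈ L) : h.proj l = l :=
  congrArg Subtype.val (h.quotientEquiv.symm_apply_apply ⟨l, hl⟩)

theorem proj_eq_zero {m : T} (hm : m ∈ M) : h.proj m = 0 := by
  simp [proj, Ideal.Quotient.eq_zero_iff_mem.mpr hm]

theorem proj_mem_of_mem_ringR (hKL : K ≤ L) {r : T} (hr : r ∈ ringR K M) : h.proj r ∈ K := by
  obtain ⟨k, hk, m, hm, rfl⟩ := hr
  rw [map_add, h.proj_eq_self (hKL hk), h.proj_eq_zero hm, add_zero]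
  exact hk

end DirectSumDecomp

theorem DirectSumDecomp.fg_span_of_finite (h : DirectSumDecomp L M) (hKL : K ≤ L)
    [Module.Finite (ringR K M) T] :
    (span K (L : Set T)).FG := by
  classical
  obtain ⟨G, hG⟩ := Module.Finite.fg_top (R := ringR K M) (M := T)
  have hproj : ∀ t ∈ span (ringR K M) (G : Set T), h.proj t ∈ span K (h.proj '' G) := by
    intro t ht
    induction ht using span_induction with
    | mem x hx => exact subset_span ⟨x, hx, rfl⟩
    | zero => rw [map_zero]; exact zero_mem _
    | add x y _ _ hx hy => rw [map_add]; exact add_mem hx hy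
    | smul r x _ hx =>
      rw [Subring.smul_def, smul_eq_mul, map_mul]
      exact smul_mem _ (⟨_, h.proj_mem_of_mem_ringR hKL r.2⟩ : K) hx
  refine ⟨G.image h.proj, le_antisymm ?_ ?_⟩
  · rw [Finset.coe_image]
    exact span_mono (Set.image_subset_iff.mpr fun t _ => h.proj_mem t)
  · rw [span_le, Finset.coe_image]
    intro l hl
    rw [← h.proj_eq_self hl]
    exact hproj l (hG ▸ mem_top)

end Setting

theorem stmt_9_general {T : Type*} [CommRing T] [IsDomain T]
    (L : Subring T) (M : Ideal T) (K : Subring T)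
    (hL : IsFieldSub L) (hM0 : M ≠ ⊥)
    (hLM : DirectSumDecomp L M) (hKL : K ≤ L) :
    IsNoetherianRing ↥(ringR K M) ↔
      (IsNoetherianRing T ∧ IsField ↥K ∧ @Module.Finite ↥K ↥L _ _ (modOfLE hKL)) := by
  constructor
  · intro hR
    obtain ⟨m, hmM, hm0⟩ := exists_mem_ne_zero_of_ne_bot hM0
    have : IsNoetherian (ringR K M) T := isNoetherian_of_mul_mem_range
      (mem_nonZeroDivisors_of_ne_zero hm0)
      fun t => ⟨⟨m * t, mem_ringR_of_mem K (M.mul_mem_right t hmM)⟩, rfl⟩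
    have hfin := (finite_iff_fg_span hKL).mpr (hLM.fg_span_of_finite hKL)
    exact ⟨isNoetherian_of_tower (ringR K M) this, isField_of_finite hL hKL hfin, hfin⟩
  · rintro ⟨hT, hK, hfin⟩
    let := hK.toField
    let : Algebra K (ringR K M) := (Subring.inclusion (K_le_ringR K M)).toAlgebra
    have : IsScalarTower K (ringR K M) T := IsScalarTower.of_algebraMap_eq fun _ => rfl
    have : IsNoetherian (ringR K M) T :=
      isNoetherian_of_eq_fg_add_range ((finite_iff_fg_span hKL).mp hfin) fun t => by
        obtain ⟨l, hl, m, hm, rfl⟩ := hLM.1 t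
        exact ⟨l, subset_span hl, ⟨m, mem_ringR_of_mem K hm⟩, rfl⟩
    exact IsNoetherianRing.of_isNoetherian_of_injective Subtype.val_injective

theorem stmt_9 {T : Type*} [CommRing T] [IsDomain T]
    (L : Subring T) (M : Ideal T) (K : Subring T)
    (hL : IsFieldSub L) (hM : M.IsMaximal) (hM0 : M ≠ ⊥)
    (hLM : DirectSumDecomp L M) (hKL : K ≤ L) (hKne : K ≠ L) :
    IsNoetherianRing ↥(ringR K M) ↔
      (IsNoetherianRing T ∧ IsField ↥K ∧ @Module.Finite ↥K ↥L _ _ (modOfLE hKL)) :=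
  stmt_9_general L M K hL hM0 hLM hKL
end

section
/- With T = L + M, R = K + M as above, if R is a Prüfer domain then there is an exact sequence of ideal class groups 1 → C(K) → C(R) → C(T) → 1, where the first map sends the class of a fractional ideal J of K to the class of JR and the second sends the class of I to the class of IT. -/
open scoped nonZeroDivisors

open FractionalIdeal in
theorem FractionalIdeal.isUnit_spanSingleton {A : Type*} [CommRing A] [IsDomain A]
    {x : FractionRing A} (hx : x ≠ 0) : IsUnit (spanSingleton A⁰ x) :=
  ⟨toPrincipalIdeal A (FractionRing A) (Units.mk0 x hx), coe_toPrincipalIdeal _⟩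

namespace Ideal

theorem map_span_singleton {R S : Type*} [Semiring R] [Semiring S] (f : R →+* S) (r : R) :
    (span {r}).map f = span {f r} := by
  rw [map_span, Set.image_singleton]

theorem span_singleton_mul_span_range {R ι : Type*} [CommSemiring R] (y : R) (f : ι → R) :
    span {y} * span (Set.range f) = span (Set.range fun i => y * f i) := by
  rw [span_mul_span', Set.singleton_mul, ← Set.range_comp]
  rfl

variable {A : Type*} [CommRing A] [IsDomain A]

theorem ne_bot_of_isUnit_coeIdeal {I : Ideal A}
    (hI : IsUnit (I : FractionalIdeal A⁰ (FractionRing A))) : I ≠ ⊥ := by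
  rintro rfl
  simp at hI

open FractionalIdeal in
theorem isUnit_coeIdeal_of_mul_eq_span_singleton {I J : Ideal A} {a : A} (ha : a ≠ 0)
    (h : I * J = span {a}) : IsUnit (I : FractionalIdeal A⁰ (FractionRing A)) := by
  have hIJ : IsUnit ((I * J : Ideal A) : FractionalIdeal A⁰ (FractionRing A)) := by
    rw [h, coeIdeal_span_singleton]
    exact isUnit_spanSingleton ((map_ne_zero_iff _ (IsFractionRing.injective A _)).mpr ha)
  rw [coeIdeal_mul] at hIJ
  exact isUnit_of_mul_isUnit_left hIJ

open FractionalIdeal in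
theorem exists_mul_eq_span_singleton_of_isUnit {I : Ideal A}
    (hI : IsUnit (I : FractionalIdeal A⁰ (FractionRing A))) {a : A} (ha : a ∈ I) :
    ∃ J : Ideal A, I * J = span {a} := by
  have hle : spanSingleton A⁰ (algebraMap A (FractionRing A) a) * ↑hI.unit⁻¹ ≤ 1 := by
    rw [← hI.mul_val_inv]
    exact mul_le_mul_left (spanSingleton_le_iff_mem.mpr (mem_coeIdeal_of_mem _ ha)) _
  obtain ⟨J, hJ⟩ := le_one_iff_exists_coeIdeal.mp hle
  refine ⟨J, coeIdeal_injective (K := FractionRing A) ?_⟩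
  simp only [coeIdeal_mul, hJ, coeIdeal_span_singleton]
  rw [mul_left_comm, hI.mul_val_inv, mul_one]

theorem isUnit_coeIdeal_map {B : Type*} [CommRing B] [IsDomain B] [Algebra A B]
    [Module.IsTorsionFree A B] {I : Ideal A}
    (hI : IsUnit (I : FractionalIdeal A⁰ (FractionRing A))) :
    IsUnit ((I.map (algebraMap A B) : Ideal B) : FractionalIdeal B⁰ (FractionRing B)) := by
  rw [← FractionalIdeal.extendedHom_coeIdeal_eq_map (K := FractionRing A)]
  exact hI.map _

end Ideal

namespace ClassGroup

variable {A B : Type*} [CommRing A] [IsDomain A] [CommRing B] [IsDomain B]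

open FractionalIdeal in
theorem exists_coeIdeal_mk_eq (c : ClassGroup A) :
    ∃ (I : Ideal A) (hI : IsUnit (I : FractionalIdeal A⁰ (FractionRing A))),
      mk (FractionRing A) hI.unit = c := by
  refine ClassGroup.induction (FractionRing A) (fun J => ?_) c
  refine ⟨(J : FractionalIdeal A⁰ (FractionRing A)).num, isUnit_num.mpr J.isUnit, ?_⟩
  rw [eq_comm, mk_eq_mk]
  have hden : algebraMap A (FractionRing A) (J : FractionalIdeal A⁰ (FractionRing A)).den ≠ 0 :=
    IsFractionRing.to_map_ne_zero_of_mem_nonZeroDivisors (SetLike.coe_mem _)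
  refine ⟨Units.mk0 _ hden, Units.ext ?_⟩
  rw [Units.val_mul, coe_toPrincipalIdeal, Units.val_mk0, mul_comm, IsUnit.unit_spec]
  exact den_mul_self_eq_num' _ _ _

theorem extendedHom_mk_coeIdeal [Algebra A B] [Module.IsTorsionFree A B] {I : Ideal A}
    (hI : IsUnit (I : FractionalIdeal A⁰ (FractionRing A)))
    (hIB : IsUnit ((I.map (algebraMap A B) : Ideal B) : FractionalIdeal B⁰ (FractionRing B))) :
    extendedHom A B (mk (FractionRing A) hI.unit) = mk (FractionRing B) hIB.unit := by
  rw [extendedHom_mk]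
  congr 1
  ext1
  simp

end ClassGroup

namespace ringR

theorem mem_of_mem_ideal {T : Type*} [CommRing T] [IsDomain T] {K : Subring T} {M : Ideal T}
    {m : T} (hm : m ∈ M) : m ∈ ringR K M :=
  ⟨0, K.zero_mem, m, hm, (zero_add m).symm⟩

variable {T : Type*} [CommRing T] [IsDomain T] {K : Subring T} {M : Ideal T}

open ClassGroup

noncomputable instance algebra : Algebra K (ringR K M) :=
  (Subring.inclusion (K_le_ringR K M)).toAlgebra

instance isTorsionFree : Module.IsTorsionFree K (ringR K M) :=
  Module.isTorsionFree_iff_algebraMap_injective.mpr (Subring.inclusion_injective _)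

theorem coe_algebraMap (k : K) : ((algebraMap K (ringR K M) k : ringR K M) : T) = k := rfl

noncomputable def quotientEquiv (hKM : ∀ x ∈ K, x ∈ M → x = 0) :
    K ≃+* ringR K M ⧸ M.comap (ringR K M).subtype :=
  RingEquiv.ofBijective ((Ideal.Quotient.mk _).comp (algebraMap K (ringR K M))) <| by
    refine ⟨(injective_iff_map_eq_zero _).mpr fun k hk => Subtype.ext (hKM k k.2 ?_), ?_⟩
    · exact Ideal.mem_comap.mp (Ideal.Quotient.eq_zero_iff_mem.mp hk)
    · intro q
      obtain ⟨r, rfl⟩ := Ideal.Quotient.mk_surjective q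
      obtain ⟨k, hk, m, hm, hr⟩ := r.2
      refine ⟨⟨k, hk⟩, Ideal.Quotient.eq.mpr (Ideal.mem_comap.mpr ?_)⟩
      show (k : T) - r ∈ M
      rw [hr, sub_add_cancel_left]
      exact M.neg_mem hm

/-- The retraction `k + m ↦ k` of `K → K + M`. -/
noncomputable def proj (hKM : ∀ x ∈ K, x ∈ M → x = 0) : ringR K M →+* K :=
  (quotientEquiv hKM).symm.toRingHom.comp (Ideal.Quotient.mk _)

theorem proj_algebraMap (hKM : ∀ x ∈ K, x ∈ M → x = 0) (k : K) :
    proj hKM (algebraMap K (ringR K M) k) = k :=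
  (quotientEquiv hKM).symm_apply_apply k

theorem sub_proj_mem (hKM : ∀ x ∈ K, x ∈ M → x = 0) (r : ringR K M) :
    (r : T) - proj hKM r ∈ M := by
  have h := (quotientEquiv hKM).apply_symm_apply (Ideal.Quotient.mk _ r)
  exact Ideal.mem_comap.mp (Ideal.Quotient.eq.mp h.symm)

theorem map_proj_map_algebraMap (hKM : ∀ x ∈ K, x ∈ M → x = 0) (J : Ideal K) :
    (J.map (algebraMap K (ringR K M))).map (proj hKM) = J := by
  rw [Ideal.map_map, show (proj hKM).comp (algebraMap K (ringR K M)) = RingHom.id K from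
    RingHom.ext (proj_algebraMap hKM), Ideal.map_id]

theorem extendedHom_injective (hKM : ∀ x ∈ K, x ∈ M → x = 0) :
    Function.Injective (extendedHom K (ringR K M)) := by
  refine (injective_iff_map_eq_one _).mpr fun c hc => ?_
  obtain ⟨J, hJ, rfl⟩ := exists_coeIdeal_mk_eq c
  rw [extendedHom_mk_coeIdeal hJ (Ideal.isUnit_coeIdeal_map hJ),
    mk_eq_one_of_coe_ideal (IsUnit.unit_spec _)] at hc
  obtain ⟨x, -, hx⟩ := hc
  have hJx : J = Ideal.span {proj hKM x} := by
    rw [← map_proj_map_algebraMap hKM J, hx, Ideal.map_span_singleton]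
  refine (mk_eq_one_of_coe_ideal hJ.unit_spec).mpr ⟨_, fun h0 => ?_, hJx⟩
  rw [h0, Ideal.span_singleton_eq_bot.mpr rfl] at hJx
  exact Ideal.ne_bot_of_isUnit_coeIdeal hJ hJx

theorem isUnit_coeIdeal_of_isUnit_map (hKM : ∀ x ∈ K, x ∈ M → x = 0) {J : Ideal K}
    (hJ : IsUnit ((J.map (algebraMap K (ringR K M)) : Ideal (ringR K M)) :
      FractionalIdeal (ringR K M)⁰ (FractionRing (ringR K M)))) :
    IsUnit (J : FractionalIdeal K⁰ (FractionRing K)) := by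
  have hJ0 : J ≠ ⊥ := by
    rintro rfl
    simp at hJ
  obtain ⟨j, hj, hj0⟩ := Submodule.exists_mem_ne_zero_of_ne_bot hJ0
  obtain ⟨J', hJJ'⟩ := Ideal.exists_mul_eq_span_singleton_of_isUnit hJ (Ideal.mem_map_of_mem _ hj)
  refine Ideal.isUnit_coeIdeal_of_mul_eq_span_singleton hj0 (J := J'.map (proj hKM)) ?_
  have := congrArg (Ideal.map (proj hKM)) hJJ'
  rwa [Ideal.map_mul, map_proj_map_algebraMap, Ideal.map_span_singleton, proj_algebraMap] at this

theorem map_map_algebraMap_eq_top (hKunit : ∀ x ∈ K, x ≠ 0 → IsUnit x)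
    {J : Ideal K} (hJ : J ≠ ⊥) :
    (J.map (algebraMap K (ringR K M))).map (algebraMap (ringR K M) T) = ⊤ := by
  obtain ⟨j, hj, hj0⟩ := Submodule.exists_mem_ne_zero_of_ne_bot hJ
  exact Ideal.eq_top_of_isUnit_mem _ (Ideal.mem_map_of_mem _ (Ideal.mem_map_of_mem _ hj))
    (hKunit j j.2 (fun h => hj0 (Subtype.ext h)))

theorem extendedHom_extendedHom_eq_one (hKunit : ∀ x ∈ K, x ≠ 0 → IsUnit x) (c : ClassGroup K) :
    extendedHom (ringR K M) T (extendedHom K (ringR K M) c) = 1 := by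
  obtain ⟨J, hJ, rfl⟩ := exists_coeIdeal_mk_eq c
  have hJR := Ideal.isUnit_coeIdeal_map (B := ringR K M) hJ
  rw [extendedHom_mk_coeIdeal hJ hJR, extendedHom_mk_coeIdeal hJR (Ideal.isUnit_coeIdeal_map hJR),
    mk_eq_one_of_coe_ideal (IsUnit.unit_spec _)]
  refine ⟨1, one_ne_zero, ?_⟩
  rw [Ideal.span_singleton_one]
  exact map_map_algebraMap_eq_top hKunit (Ideal.ne_bot_of_isUnit_coeIdeal hJ)

theorem exists_mul_mem_of_finite (hden : ∀ t : T, ∃ b ∈ K, b ≠ 0 ∧ b * t ∈ ringR K M)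
    {ι : Type*} [Finite ι] (t : ι → T) :
    ∃ b ∈ K, b ≠ 0 ∧ ∃ f : ι → ringR K M, ∀ i, (f i : T) = b * t i := by
  suffices h : ∀ s : Set T, s.Finite → ∃ b ∈ K, b ≠ 0 ∧ ∀ t ∈ s, b * t ∈ ringR K M by
    obtain ⟨b, hb, hb0, hbs⟩ := h _ (Set.finite_range t)
    exact ⟨b, hb, hb0, fun i => ⟨b * t i, hbs _ (Set.mem_range_self i)⟩, fun _ => rfl⟩
  intro s hs
  induction s, hs using Set.Finite.induction_on with
  | empty => exact ⟨1, K.one_mem, one_ne_zero, by simp⟩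
  | @insert t s _ _ ih =>
    obtain ⟨b, hb, hb0, hbs⟩ := ih
    obtain ⟨c, hc, hc0, hct⟩ := hden t
    refine ⟨c * b, K.mul_mem hc hb, mul_ne_zero hc0 hb0, ?_⟩
    rintro t' (rfl | ht')
    · rw [mul_right_comm]
      exact (ringR K M).mul_mem hct (K_le_ringR K M hb)
    · rw [mul_assoc]
      exact (ringR K M).mul_mem (K_le_ringR K M hc) (hbs t' ht')

theorem extendedHom_surjective (hden : ∀ t : T, ∃ b ∈ K, b ≠ 0 ∧ b * t ∈ ringR K M)
    (hpruf : IsPruferDomain (ringR K M)) :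
    Function.Surjective (extendedHom (ringR K M) T) := by
  intro c
  obtain ⟨A, hA, rfl⟩ := exists_coeIdeal_mk_eq c
  obtain ⟨s, hs, rfl⟩ :=
    Submodule.fg_def.mp (Ideal.fg_of_isUnit (IsFractionRing.injective T (FractionRing T)) _ hA)
  have := hs.to_subtype
  obtain ⟨b, -, hb0, f, hf⟩ := exists_mul_mem_of_finite hden (fun t : s => (t : T))
  have hIT : (Ideal.span (Set.range f)).map (algebraMap (ringR K M) T) =
      Ideal.span {b} * Ideal.span s := by
    conv_rhs => rw [← Subtype.range_coe (s := s), Ideal.span_singleton_mul_span_range]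
    rw [Ideal.map_span, ← Set.range_comp]
    exact congrArg _ (congrArg _ (funext hf))
  have hI0 : Ideal.span (Set.range f) ≠ ⊥ := by
    intro h
    rw [h, Ideal.map_bot, eq_comm, Ideal.mul_eq_bot, Ideal.span_singleton_eq_bot] at hIT
    exact hIT.elim hb0 (Ideal.ne_bot_of_isUnit_coeIdeal hA)
  have hIu := hpruf _ hI0 (Submodule.fg_span (Set.finite_range f))
  refine ⟨mk _ hIu.unit, ?_⟩
  rw [extendedHom_mk_coeIdeal hIu (Ideal.isUnit_coeIdeal_map hIu)]
  exact (mk_eq_mk_of_coe_ideal (IsUnit.unit_spec _) hA.unit_spec).mpr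
    ⟨1, b, one_ne_zero, hb0, by rw [hIT, Ideal.span_singleton_one, Ideal.top_mul]⟩

theorem mem_map_algebraMap_of_coe_mem (hKunit : ∀ x ∈ K, x ≠ 0 → IsUnit x)
    {J : Ideal K} (hJ : J ≠ ⊥) {r : ringR K M} (hr : (r : T) ∈ M) :
    r ∈ J.map (algebraMap K (ringR K M)) := by
  obtain ⟨j, hj, hj0⟩ := Submodule.exists_mem_ne_zero_of_ne_bot hJ
  obtain ⟨u, hu⟩ := hKunit j j.2 (fun h => hj0 (Subtype.ext h))
  have hm : (↑u⁻¹ * r : T) ∈ ringR K M := mem_of_mem_ideal (M.mul_mem_left _ hr)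
  have hr' : r = ⟨_, hm⟩ * algebraMap K (ringR K M) j := by
    ext
    simp only [Subring.coe_mul, coe_algebraMap, ← hu]
    rw [mul_right_comm, Units.inv_mul, one_mul]
  rw [hr']
  exact Ideal.mul_mem_left _ _ (Ideal.mem_map_of_mem _ hj)

theorem exists_mem_coe_eq_mul {I : Ideal (ringR K M)} {z : T}
    (hz : z ∈ I.map (algebraMap (ringR K M) T)) {m : T} (hm : m ∈ M) :
    ∃ i ∈ I, (i : T) = z * m := by
  induction hz using Submodule.span_induction generalizing m with
  | mem z hz =>
    obtain ⟨i, hi, rfl⟩ := hz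
    exact ⟨i * ⟨m, mem_of_mem_ideal hm⟩, I.mul_mem_right _ hi, rfl⟩
  | zero => exact ⟨0, I.zero_mem, (zero_mul m).symm⟩
  | add a b _ _ ha hb =>
    obtain ⟨i₁, hi₁, h₁⟩ := ha hm
    obtain ⟨i₂, hi₂, h₂⟩ := hb hm
    exact ⟨i₁ + i₂, I.add_mem hi₁ hi₂, by push_cast; rw [h₁, h₂, add_mul]⟩
  | smul t z _ hz =>
    obtain ⟨i, hi, h⟩ := hz (M.mul_mem_left t hm)
    exact ⟨i, hi, by rw [h, smul_eq_mul]; ring⟩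

/-- An ideal `I` of `K + M` with `I T = T` contains `M = M I T`, hence is extended from `K`. -/
theorem map_algebraMap_map_proj (hKM : ∀ x ∈ K, x ∈ M → x = 0)
    (hKunit : ∀ x ∈ K, x ≠ 0 → IsUnit x) (hMtop : M ≠ ⊤) {I : Ideal (ringR K M)}
    (hI : I.map (algebraMap (ringR K M) T) = ⊤) :
    (I.map (proj hKM)).map (algebraMap K (ringR K M)) = I := by
  have hMI : ∀ r : ringR K M, (r : T) ∈ M → r ∈ I := by
    intro r hr
    obtain ⟨i, hi, h⟩ := exists_mem_coe_eq_mul (hI ▸ Submodule.mem_top (x := 1)) hr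
    rw [one_mul, ← Subtype.ext_iff] at h
    exact h ▸ hi
  have hproj : ∀ r ∈ I, algebraMap K (ringR K M) (proj hKM r) ∈ I := fun r hr => by
    have hsub : r - algebraMap K (ringR K M) (proj hKM r) ∈ I := hMI _ (sub_proj_mem hKM r)
    simpa using I.sub_mem hr hsub
  have hJ0 : I.map (proj hKM) ≠ ⊥ := by
    intro hJ
    refine hMtop (top_le_iff.mp (hI ▸ Ideal.map_le_iff_le_comap.mpr fun r hr => ?_))
    have h0 : proj hKM r = 0 := by
      rw [← Ideal.mem_bot, ← hJ]
      exact Ideal.mem_map_of_mem _ hr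
    have h := sub_proj_mem hKM r
    rwa [h0, ZeroMemClass.coe_zero, sub_zero] at h
  refine le_antisymm (Ideal.map_le_iff_le_comap.mpr (Ideal.map_le_iff_le_comap.mpr hproj))
    fun r hr => ?_
  rw [← add_sub_cancel (algebraMap K (ringR K M) (proj hKM r)) r]
  exact Ideal.add_mem _ (Ideal.mem_map_of_mem _ (Ideal.mem_map_of_mem _ hr))
    (mem_map_algebraMap_of_coe_mem hKunit hJ0 (sub_proj_mem hKM r))

/-- Write the generators of `I` as `τ g * t₀`; clearing the denominators of the `τ g` gives an
ideal `I'` in the class of `I` with `I' T = T`. -/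
theorem exists_span_singleton_mul_eq_of_map_eq (hKunit : ∀ x ∈ K, x ≠ 0 → IsUnit x)
    (hden : ∀ t : T, ∃ b ∈ K, b ≠ 0 ∧ b * t ∈ ringR K M) {I : Ideal (ringR K M)} (hI : I.FG)
    {t₀ : T} (ht₀ : t₀ ≠ 0) (hIT : I.map (algebraMap (ringR K M) T) = Ideal.span {t₀}) :
    ∃ (x y : ringR K M) (I' : Ideal (ringR K M)), x ≠ 0 ∧ y ≠ 0 ∧ I'.FG ∧
      I'.map (algebraMap (ringR K M) T) = ⊤ ∧ Ideal.span {x} * I' = Ideal.span {y} * I := by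
  obtain ⟨s, hs, rfl⟩ := Submodule.fg_def.mp hI
  have := hs.to_subtype
  have hτ (g : s) : ∃ τ : T, τ * t₀ = g :=
    Ideal.mem_span_singleton'.mp (hIT ▸ Ideal.mem_map_of_mem _ (Ideal.subset_span g.2))
  choose τ hτ using hτ
  obtain ⟨d, hdK, hd0, f, hf⟩ := exists_mul_mem_of_finite hden τ
  obtain ⟨b, hbK, hb0, hbt₀⟩ := hden t₀
  let x : ringR K M := ⟨b * t₀, hbt₀⟩
  let y : ringR K M := ⟨b * d, K_le_ringR K M (K.mul_mem hbK hdK)⟩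
  have hx0 : algebraMap (ringR K M) T x ≠ 0 := mul_ne_zero hb0 ht₀
  have hy0 : algebraMap (ringR K M) T y ≠ 0 := mul_ne_zero hb0 hd0
  have key : Ideal.span {x} * Ideal.span (Set.range f) = Ideal.span {y} * Ideal.span s := by
    conv_rhs => rw [← Subtype.range_coe (s := s)]
    rw [Ideal.span_singleton_mul_span_range, Ideal.span_singleton_mul_span_range]
    congr 2
    funext g
    ext
    simp only [Subring.coe_mul, hf, x, y, ← hτ g]
    ring
  refine ⟨x, y, _, fun h => hx0 (by rw [h, map_zero]), fun h => hy0 (by rw [h, map_zero]),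
    Submodule.fg_span (Set.finite_range f), ?_, key⟩
  have hyx : algebraMap (ringR K M) T y * t₀ = algebraMap (ringR K M) T x * d := by
    show b * d * t₀ = b * t₀ * d
    ring
  have hkeyT := congrArg (Ideal.map (algebraMap (ringR K M) T)) key
  rw [Ideal.map_mul, Ideal.map_mul, hIT, Ideal.map_span_singleton, Ideal.map_span_singleton,
    Ideal.span_singleton_mul_span_singleton, hyx, ← Ideal.span_singleton_mul_span_singleton,
    Ideal.span_singleton_mul_right_inj hx0, Ideal.span_singleton_eq_top.mpr (hKunit d hdK hd0)]
    at hkeyT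
  exact hkeyT

theorem ker_extendedHom_le_range (hKM : ∀ x ∈ K, x ∈ M → x = 0)
    (hKunit : ∀ x ∈ K, x ≠ 0 → IsUnit x) (hden : ∀ t : T, ∃ b ∈ K, b ≠ 0 ∧ b * t ∈ ringR K M)
    (hMtop : M ≠ ⊤) (hpruf : IsPruferDomain (ringR K M)) :
    (extendedHom (ringR K M) T).ker ≤ (extendedHom K (ringR K M)).range := by
  intro c hc
  obtain ⟨I, hI, rfl⟩ := exists_coeIdeal_mk_eq c
  rw [MonoidHom.mem_ker, extendedHom_mk_coeIdeal hI (Ideal.isUnit_coeIdeal_map hI),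
    mk_eq_one_of_coe_ideal (IsUnit.unit_spec _)] at hc
  obtain ⟨t₀, ht₀, hIT⟩ := hc
  obtain ⟨x, y, I', hx, hy, hI'fg, hI'T, hII'⟩ := exists_span_singleton_mul_eq_of_map_eq
    hKunit hden (Ideal.fg_of_isUnit (IsFractionRing.injective _ _) I hI) ht₀ hIT
  have hJ := map_algebraMap_map_proj hKM hKunit hMtop hI'T
  have hJu : IsUnit ((I'.map (proj hKM)).map (algebraMap K (ringR K M)) :
      FractionalIdeal (ringR K M)⁰ (FractionRing (ringR K M))) := by
    rw [hJ]
    refine hpruf I' (fun h => ?_) hI'fg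
    rw [h, Ideal.map_bot] at hI'T
    exact bot_ne_top hI'T
  refine ⟨mk _ (isUnit_coeIdeal_of_isUnit_map hKM hJu).unit, ?_⟩
  rw [extendedHom_mk_coeIdeal _ hJu]
  exact (mk_eq_mk_of_coe_ideal (IsUnit.unit_spec _) hI.unit_spec).mpr ⟨x, y, hx, hy, by rwa [hJ]⟩

theorem range_extendedHom_eq_ker (hKM : ∀ x ∈ K, x ∈ M → x = 0)
    (hKunit : ∀ x ∈ K, x ≠ 0 → IsUnit x) (hden : ∀ t : T, ∃ b ∈ K, b ≠ 0 ∧ b * t ∈ ringR K M)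
    (hMtop : M ≠ ⊤) (hpruf : IsPruferDomain (ringR K M)) :
    (extendedHom K (ringR K M)).range = (extendedHom (ringR K M) T).ker := by
  refine le_antisymm ?_ (ker_extendedHom_le_range hKM hKunit hden hMtop hpruf)
  rintro _ ⟨c, rfl⟩
  exact extendedHom_extendedHom_eq_one hKunit c

end ringR

theorem DirectSumDecomp.exists_mul_mem_ringR {T : Type*} [CommRing T] [IsDomain T]
    {L K : Subring T} {M : Ideal T} (hLM : DirectSumDecomp L M) (hfrac : IsFracOf K L) (t : T) :
    ∃ b ∈ K, b ≠ 0 ∧ b * t ∈ ringR K M := by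
  obtain ⟨l, hl, m, hm, rfl⟩ := hLM.1 t
  obtain ⟨a, ha, b, hb, hb0, hlb⟩ := hfrac l hl
  exact ⟨b, hb, hb0, a, ha, b * m, M.mul_mem_left b hm, by rw [← hlb]; ring⟩

theorem stmt_13_general {T : Type*} [CommRing T] [IsDomain T]
    (L : Subring T) (M : Ideal T) (K : Subring T)
    (hL : IsFieldSub L) (hM : M.IsMaximal)
    (hLM : DirectSumDecomp L M) (hKL : K ≤ L)
    (hfrac : IsFracOf K L) (hpruf : IsPruferDomain ↥(ringR K M)) :
    ∃ (α : ClassGroup ↥K →* ClassGroup ↥(ringR K M))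
      (β : ClassGroup ↥(ringR K M) →* ClassGroup T),
      Function.Injective α ∧ Function.Surjective β ∧
      MonoidHom.range α = MonoidHom.ker β ∧
      (∀ (J : Ideal ↥K)
        (hJ : IsUnit (J : FractionalIdeal (nonZeroDivisors ↥K) (FractionRing ↥K)))
        (hJR : IsUnit ((J.map (Subring.inclusion (K_le_ringR K M)) : Ideal ↥(ringR K M)) :
          FractionalIdeal (nonZeroDivisors ↥(ringR K M)) (FractionRing ↥(ringR K M)))),
        α (ClassGroup.mk (FractionRing ↥K) hJ.unit) =
          ClassGroup.mk (FractionRing ↥(ringR K M)) hJR.unit) ∧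
      (∀ (I : Ideal ↥(ringR K M))
        (hI : IsUnit (I : FractionalIdeal (nonZeroDivisors ↥(ringR K M))
          (FractionRing ↥(ringR K M))))
        (hIT : IsUnit ((I.map (ringR K M).subtype : Ideal T) :
          FractionalIdeal (nonZeroDivisors T) (FractionRing T))),
        β (ClassGroup.mk (FractionRing ↥(ringR K M)) hI.unit) =
          ClassGroup.mk (FractionRing T) hIT.unit) := by
  have hKM : ∀ x ∈ K, x ∈ M → x = 0 := fun x hx => hLM.2 x (hKL hx)
  have hKunit : ∀ x ∈ K, x ≠ 0 → IsUnit x := fun x hx hx0 =>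
    let ⟨y, _, hxy⟩ := hL x (hKL hx) hx0
    IsUnit.of_mul_eq_one y hxy
  have hden := hLM.exists_mul_mem_ringR hfrac
  -- `algebraMap` is `Subring.inclusion` resp. `Subring.subtype` by definition.
  exact ⟨ClassGroup.extendedHom K (ringR K M), ClassGroup.extendedHom (ringR K M) T,
    ringR.extendedHom_injective hKM, ringR.extendedHom_surjective hden hpruf,
    ringR.range_extendedHom_eq_ker hKM hKunit hden hM.ne_top hpruf,
    fun _ hJ hJR => ClassGroup.extendedHom_mk_coeIdeal hJ hJR,
    fun _ hI hIT => ClassGroup.extendedHom_mk_coeIdeal hI hIT⟩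

set_option synthInstance.maxHeartbeats 1000000 in
set_option maxHeartbeats 2000000 in
theorem stmt_13 {T : Type*} [CommRing T] [IsDomain T]
    (L : Subring T) (M : Ideal T) (K : Subring T)
    (hL : IsFieldSub L) (hM : M.IsMaximal) (hM0 : M ≠ ⊥)
    (hLM : DirectSumDecomp L M) (hKL : K ≤ L) (hKne : K ≠ L)
    (hfrac : IsFracOf K L) (hpruf : IsPruferDomain ↥(ringR K M)) :
    ∃ (α : ClassGroup ↥K →* ClassGroup ↥(ringR K M))
      (β : ClassGroup ↥(ringR K M) →* ClassGroup T),
      Function.Injective α ∧ Function.Surjective β ∧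
      MonoidHom.range α = MonoidHom.ker β ∧
      (∀ (J : Ideal ↥K)
        (hJ : IsUnit (J : FractionalIdeal (nonZeroDivisors ↥K) (FractionRing ↥K)))
        (hJR : IsUnit ((J.map (Subring.inclusion (K_le_ringR K M)) : Ideal ↥(ringR K M)) :
          FractionalIdeal (nonZeroDivisors ↥(ringR K M)) (FractionRing ↥(ringR K M)))),
        α (ClassGroup.mk (FractionRing ↥K) hJ.unit) =
          ClassGroup.mk (FractionRing ↥(ringR K M)) hJR.unit) ∧
      (∀ (I : Ideal ↥(ringR K M))
        (hI : IsUnit (I : FractionalIdeal (nonZeroDivisors ↥(ringR K M))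
          (FractionRing ↥(ringR K M))))
        (hIT : IsUnit ((I.map (ringR K M).subtype : Ideal T) :
          FractionalIdeal (nonZeroDivisors T) (FractionRing T))),
        β (ClassGroup.mk (FractionRing ↥(ringR K M)) hI.unit) =
          ClassGroup.mk (FractionRing T) hIT.unit) :=
  stmt_13_general L M K hL hM hLM hKL hfrac hpruf
end
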